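/- arXiv:1512.04711 — 3 statements merged into one kernel-verified Lean document; each statement's English description precedes it below -/
import Mathlib

section
/- For all positive integers a, b with b ≥ 2, ⌊a/b⌋ = a/b + 1/(2b) − 1/2 + (1/(2b))·∑_{m=1}^{b-1} (1 − i·cot(πm/b))·exp(2πima/b). -/
/-!
Put `ζ = exp (2πi/b)`. For `θ = πm/b` and `w = ζ^m = exp (2iθ)` one has
`1 - i cot θ = 2w/(w - 1)`, and `exp (2πima/b) = ζ^(mr)` with `r = a % b`.
The sum `T r = ∑ ζ^m/(ζ^m - 1) ζ^(mr)` over `1 ≤ m ≤ b - 1` drops by one at each step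
`r → r + 1 < b`, the difference being `∑ ζ^(m(r+1)) = -1`, while `2 T 0 = b - 1` by pairing
`m` with `b - m`. So `2 T r = b - 1 - 2r`, and the right-hand side collapses to `(a - r)/b`.
-/

open Finset Complex

namespace IsPrimitiveRoot

variable {K : Type*} [Field K] {ζ : K} {n : ℕ}

theorem sum_Icc_pow_mul_eq_neg_one (hζ : IsPrimitiveRoot ζ n) {k : ℕ} (hk₀ : 0 < k)
    (hkn : k < n) : ∑ m ∈ Icc 1 (n - 1), ζ ^ (m * k) = -1 := by
  have hgeom : ∑ m ∈ range n, (ζ ^ k) ^ m = 0 := by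
    rw [geom_sum_eq (hζ.pow_ne_one_of_pos_of_lt hk₀.ne' hkn), ← pow_mul, mul_comm,
      pow_mul, hζ.pow_eq_one, one_pow, sub_self, zero_div]
  rw [sum_range_eq_add_Ico _ (by omega), pow_zero,
    ← Icc_sub_one_right_eq_Ico_of_not_isMin (by simp; omega)] at hgeom
  simp_rw [mul_comm _ k, pow_mul]
  linear_combination hgeom

theorem two_mul_sum_div_pow_sub_one (hζ : IsPrimitiveRoot ζ n) (hn : 0 < n) :
    2 * ∑ m ∈ Icc 1 (n - 1), ζ ^ m / (ζ ^ m - 1) = n - 1 := by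
  have hreflect : ∑ m ∈ Icc 1 (n - 1), ζ ^ (n - m) / (ζ ^ (n - m) - 1) =
      ∑ m ∈ Icc 1 (n - 1), ζ ^ m / (ζ ^ m - 1) :=
    sum_nbij' (n - ·) (n - ·) (by simp; omega) (by simp; omega) (by simp; omega)
      (by simp; omega) (fun _ _ ↦ rfl)
  have hpair : ∀ m ∈ Icc 1 (n - 1),
      ζ ^ m / (ζ ^ m - 1) + ζ ^ (n - m) / (ζ ^ (n - m) - 1) = 1 := by
    intro m hm
    rw [mem_Icc] at hm
    have hζm : ζ ^ m - 1 ≠ 0 :=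
      sub_ne_zero.2 (hζ.pow_ne_one_of_pos_of_lt (by omega) (by omega))
    have hζm' : 1 - ζ ^ m ≠ 0 := sub_ne_zero.2 (sub_ne_zero.1 hζm).symm
    have hζ0 : ζ ^ m ≠ 0 := pow_ne_zero _ (hζ.ne_zero hn.ne')
    rw [pow_sub₀ _ (hζ.ne_zero hn.ne') (by omega), hζ.pow_eq_one, one_mul]
    field_simp
    ring
  calc 2 * ∑ m ∈ Icc 1 (n - 1), ζ ^ m / (ζ ^ m - 1)
      = ∑ m ∈ Icc 1 (n - 1), (ζ ^ m / (ζ ^ m - 1) + ζ ^ (n - m) / (ζ ^ (n - m) - 1)) := by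
        rw [sum_add_distrib, hreflect, two_mul]
    _ = n - 1 := by
        rw [sum_congr rfl hpair, sum_const, Nat.card_Icc, nsmul_one, Nat.add_sub_cancel,
          Nat.cast_pred hn]

theorem two_mul_sum_div_pow_sub_one_mul_pow (hζ : IsPrimitiveRoot ζ n) {r : ℕ} (hr : r < n) :
    2 * ∑ m ∈ Icc 1 (n - 1), ζ ^ m / (ζ ^ m - 1) * ζ ^ (m * r) = n - 1 - 2 * r := by
  induction r with
  | zero => simpa using hζ.two_mul_sum_div_pow_sub_one (by omega)
  | succ r ih =>
    have hstep : ∑ m ∈ Icc 1 (n - 1), ζ ^ m / (ζ ^ m - 1) * ζ ^ (m * (r + 1)) =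
        ∑ m ∈ Icc 1 (n - 1), ζ ^ m / (ζ ^ m - 1) * ζ ^ (m * r) +
          ∑ m ∈ Icc 1 (n - 1), ζ ^ (m * (r + 1)) := by
      rw [← sum_add_distrib]
      refine sum_congr rfl fun m hm ↦ ?_
      rw [mem_Icc] at hm
      have hζm : ζ ^ m - 1 ≠ 0 :=
        sub_ne_zero.2 (hζ.pow_ne_one_of_pos_of_lt (by omega) (by omega))
      field_simp
      ring
    rw [hstep, mul_add, ih (by omega), hζ.sum_Icc_pow_mul_eq_neg_one r.succ_pos hr]
    push_cast
    ring

end IsPrimitiveRoot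

theorem Complex.one_sub_I_mul_cot {z : ℂ} (h : exp (2 * I * z) ≠ 1) :
    1 - I * cot z = 2 * (exp (2 * I * z) / (exp (2 * I * z) - 1)) := by
  rw [cot_eq_exp_ratio]
  generalize exp (2 * I * z) = w at *
  have h' : 1 - w ≠ 0 := sub_ne_zero.2 h.symm
  have h'' : w - 1 ≠ 0 := sub_ne_zero.2 h
  field_simp
  ring

theorem stmt_4_general (a b : ℕ) (hb : 2 ≤ b) :
    ((a / b : ℕ) : ℂ) =
      (a : ℂ) / b + 1 / (2 * b) - 1 / 2 +
      (1 / (2 * (b : ℂ))) * ∑ m ∈ Finset.Icc 1 (b - 1),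
        (1 - Complex.I * (Real.cot (Real.pi * m / b) : ℂ)) *
          Complex.exp (2 * Real.pi * Complex.I * m * a / b) := by
  set ζ := exp (2 * Real.pi * I / b)
  have hζ : IsPrimitiveRoot ζ b := isPrimitiveRoot_exp b (by omega)
  have hsummand : ∀ m ∈ Icc 1 (b - 1),
      (1 - I * (Real.cot (Real.pi * m / b) : ℂ)) * exp (2 * Real.pi * I * m * a / b) =
        2 * (ζ ^ m / (ζ ^ m - 1) * ζ ^ (m * (a % b))) := by
    intro m hm
    rw [mem_Icc] at hm
    have hw : exp (2 * I * (Real.pi * m / b : ℝ)) = ζ ^ m := by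
      rw [← exp_nat_mul]; push_cast; ring_nf
    have hma : exp (2 * Real.pi * I * m * a / b) = ζ ^ (m * (a % b)) := by
      have hζa : ζ ^ (a % b) = ζ ^ a := hζ.eq_orderOf ▸ pow_mod_orderOf ζ a
      rw [pow_mul', hζa, ← pow_mul', ← exp_nat_mul]
      push_cast
      ring_nf
    have hw1 : exp (2 * I * (Real.pi * m / b : ℝ)) ≠ 1 :=
      hw ▸ hζ.pow_ne_one_of_pos_of_lt (by omega) (by omega)
    rw [ofReal_cot, one_sub_I_mul_cot hw1, hw, hma, mul_assoc]
  rw [sum_congr rfl hsummand, ← mul_sum,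
    hζ.two_mul_sum_div_pow_sub_one_mul_pow (Nat.mod_lt a (by omega))]
  have ha : (a : ℂ) = b * (a / b : ℕ) + (a % b : ℕ) := by
    exact_mod_cast (Nat.div_add_mod a b).symm
  have hb0 : (b : ℂ) ≠ 0 := by exact_mod_cast (show b ≠ 0 by omega)
  rw [ha]
  field_simp
  ring

theorem stmt_4 (a b : ℕ) (ha : 1 ≤ a) (hb : 2 ≤ b) :
    ((a / b : ℕ) : ℂ) =
      (a : ℂ) / b + 1 / (2 * b) - 1 / 2 +
      (1 / (2 * (b : ℂ))) * ∑ m ∈ Finset.Icc 1 (b - 1),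
        (1 - Complex.I * (Real.cot (Real.pi * m / b) : ℂ)) *
          Complex.exp (2 * Real.pi * Complex.I * m * a / b) :=
  stmt_4_general a b hb
end

section
/- For every real θ with 0 < θ < 2π, the series ∑_{a=1}^{∞} sin(aθ)/a converges to (π − θ)/2. -/
/-!
Put `z = exp (θ * I)`; the partial sums are the imaginary parts of those of `∑ zⁿ / n`.
On the closed unit disc minus `1` this series converges by Dirichlet's test, and Abel's limit
theorem identifies its sum with `-log (1 - z)`. Finally
`1 - exp (θ * I) = 2 sin (θ / 2) · exp ((θ - π) / 2 * I)` with `2 sin (θ / 2) > 0`, so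
`arg (1 - z) = (θ - π) / 2` and the imaginary part of `-log (1 - z)` is `(π - θ) / 2`.
-/

open Filter Topology Finset Complex
open scoped Real

lemma norm_geom_sum_le_two_div {𝕜 : Type*} [NormedDivisionRing 𝕜] {z : 𝕜} (hz : ‖z‖ ≤ 1)
    (hz1 : z ≠ 1) (n : ℕ) : ‖∑ i ∈ range n, z ^ i‖ ≤ 2 / ‖1 - z‖ := by
  rw [geom_sum_eq hz1, norm_div, ← norm_neg (z - 1), neg_sub]
  gcongr
  calc ‖z ^ n - 1‖ ≤ ‖z ^ n‖ + ‖(1 : 𝕜)‖ := norm_sub_le _ _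
    _ ≤ 1 + 1 := by
      rw [norm_pow, norm_one]
      gcongr
      exact pow_le_one₀ (norm_nonneg z) hz
    _ = 2 := one_add_one_eq_two

lemma re_lt_one_of_norm_le_one {z : ℂ} (hz : ‖z‖ ≤ 1) (hz1 : z ≠ 1) : z.re < 1 := by
  by_contra! h
  have hre : z.re = ‖z‖ := le_antisymm (re_le_norm z) (by linarith)
  have him : z.im = 0 := abs_re_eq_norm.1 (by rw [abs_of_pos (by linarith), hre])
  exact hz1 (Complex.ext (by rw [one_re]; linarith) (by simpa using him))

lemma cauchySeq_sum_range_pow_div {z : ℂ} (hz : ‖z‖ ≤ 1) (hz1 : z ≠ 1) :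
    CauchySeq fun N ↦ ∑ n ∈ range N, z ^ n / n := by
  have hanti : Antitone fun n : ℕ ↦ 1 / ((n : ℝ) + 1) := fun m n h ↦ by dsimp only; gcongr
  have hbound (n : ℕ) : ‖∑ i ∈ range n, z ^ (i + 1)‖ ≤ 2 / ‖1 - z‖ := by
    simp_rw [pow_succ', ← mul_sum, norm_mul]
    exact (mul_le_of_le_one_left (norm_nonneg _) hz).trans (norm_geom_sum_le_two_div hz hz1 n)
  have hD := hanti.cauchySeq_series_mul_of_tendsto_zero_of_bounded
    tendsto_one_div_add_atTop_nhds_zero_nat hbound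
  rw [← cauchySeq_shift 1]
  convert hD using 2 with N
  rw [sum_range_succ', CharP.cast_eq_zero, div_zero, add_zero]
  refine sum_congr rfl fun i _ ↦ ?_
  rw [Complex.real_smul]
  push_cast
  ring

lemma tendsto_sum_range_pow_div_neg_log {z : ℂ} (hz : ‖z‖ ≤ 1) (hz1 : z ≠ 1) :
    Tendsto (fun N ↦ ∑ n ∈ range N, z ^ n / n) atTop (𝓝 (-log (1 - z))) := by
  obtain ⟨L, hL⟩ := cauchySeq_tendsto_of_complete (cauchySeq_sum_range_pow_div hz hz1)
  suffices L = -log (1 - z) from this ▸ hL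
  have habel := tendsto_tsum_powerSeries_nhdsWithin_lt hL
  rw [tendsto_map'_iff] at habel
  have hslit : 1 - z ∈ slitPlane := Or.inl (by simpa using re_lt_one_of_norm_le_one hz hz1)
  have hcont : Tendsto (fun x : ℝ ↦ -log (1 - x * z)) (𝓝[<] 1) (𝓝 (-log (1 - z))) := by
    have h1 : Tendsto (fun x : ℝ ↦ 1 - (x : ℂ) * z) (𝓝[<] 1) (𝓝 (1 - z)) := by
      have : ContinuousAt (fun x : ℝ ↦ 1 - (x : ℂ) * z) 1 := by fun_prop
      simpa using this.tendsto.mono_left nhdsWithin_le_nhds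
    exact (h1.clog hslit).neg
  refine tendsto_nhds_unique habel (hcont.congr' ?_)
  filter_upwards [Ioo_mem_nhdsLT zero_lt_one] with x hx
  have hxz : ‖(x : ℂ) * z‖ < 1 := by
    rw [norm_mul, norm_real, Real.norm_of_nonneg hx.1.le]
    exact (mul_le_of_le_one_right hx.1.le hz).trans_lt hx.2
  rw [Function.comp_apply, ← (hasSum_taylorSeries_neg_log hxz).tsum_eq]
  exact tsum_congr fun n ↦ by ring

lemma one_sub_exp_mul_I (θ : ℝ) :
    1 - exp (θ * I) = (2 * Real.sin (θ / 2) : ℝ) * exp ((θ - π) / 2 * I) := by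
  have hw : exp (θ * I) = exp (θ / 2 * I) ^ 2 := by rw [← exp_nat_mul]; push_cast; ring_nf
  rw [hw, show ((θ : ℂ) - π) / 2 * I = θ / 2 * I - π / 2 * I by ring, exp_sub,
    exp_pi_div_two_mul_I]
  push_cast
  rw [Complex.sin, neg_mul, exp_neg]
  have := exp_ne_zero (θ / 2 * I)
  field_simp

lemma two_mul_sin_half_pos {θ : ℝ} (h0 : 0 < θ) (h2 : θ < 2 * π) :
    0 < 2 * Real.sin (θ / 2) :=
  mul_pos two_pos (Real.sin_pos_of_pos_of_lt_pi (by linarith) (by linarith))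

lemma arg_one_sub_exp_mul_I {θ : ℝ} (h0 : 0 < θ) (h2 : θ < 2 * π) :
    arg (1 - exp (θ * I)) = (θ - π) / 2 := by
  rw [one_sub_exp_mul_I, arg_real_mul _ (two_mul_sin_half_pos h0 h2), ← ofReal_ofNat,
    ← ofReal_sub, ← ofReal_div, arg_exp_mul_I, toIocMod_eq_self]
  constructor <;> linarith

lemma im_sum_range_succ_exp_mul_I_pow_div (θ : ℝ) (N : ℕ) :
    (∑ n ∈ range (N + 1), exp (θ * I) ^ n / n).im = ∑ a ∈ Icc 1 N, Real.sin (a * θ) / a := by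
  rw [im_sum, range_eq_Ico, sum_eq_sum_Ico_succ_bot N.succ_pos, zero_add, Nat.succ_eq_add_one,
    Ico_add_one_right_eq_Icc]
  simp only [CharP.cast_eq_zero, div_zero, zero_im, zero_add]
  refine sum_congr rfl fun n _ ↦ ?_
  rw [← exp_nat_mul, div_natCast_im, ← mul_assoc, ← ofReal_natCast, ← ofReal_mul,
    exp_ofReal_mul_I_im]

theorem stmt_8 (θ : ℝ) (h0 : 0 < θ) (h2 : θ < 2 * Real.pi) :
    Filter.Tendsto (fun N : ℕ => ∑ a ∈ Finset.Icc 1 N, Real.sin (a * θ) / a)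
      Filter.atTop (nhds ((Real.pi - θ) / 2)) := by
  have hz : ‖exp (θ * I)‖ ≤ 1 := (norm_exp_ofReal_mul_I θ).le
  have hz1 : exp (θ * I) ≠ 1 := by
    refine (sub_ne_zero.1 ?_).symm
    rw [one_sub_exp_mul_I]
    exact mul_ne_zero (ofReal_ne_zero.2 (two_mul_sin_half_pos h0 h2).ne') (exp_ne_zero _)
  have hlim := (continuous_im.tendsto _).comp
    ((tendsto_add_atTop_iff_nat 1).2 (tendsto_sum_range_pow_div_neg_log hz hz1))
  rw [neg_im, log_im, arg_one_sub_exp_mul_I h0 h2, show -((θ - π) / 2) = (π - θ) / 2 by ring]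
    at hlim
  simpa only [Function.comp_def, im_sum_range_succ_exp_mul_I_pow_div] using hlim
end

section
/- There exist an absolute constant C₀ and a constant A > 0 such that for every integer b ≥ 2, |r(b) − C₀| ≤ A/b, where r(b) := ∑_{k≥1} k·( log(((k+1)b−1)/(kb−1)) − 1/k + 1/(2k²) − 1/(bk²) ). -/
/-! With `K = k + 1`, the `k`-th summand of `r b` is `rSummand b K`, whose limit as `b → ∞` is
`limitTerm K = K (log (1 + 1/K) - 1/K + 1/(2K²))`. The Taylor bounds
`x - x²/2 ≤ log (1 + x) ≤ x - x²/2 + x³/3` (for `x ≥ 0`) put `limitTerm K` in `[0, 1/(3K²)]`,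
so `C₀ = ∑ limitTerm K` converges. The difference of the two summands is `K (log (1 + u) - v)`
with `u = 1/((Kb - 1)(K + 1)) ≤ v = 1/(bK²)`, and `v - u` and `u²` are both `O(1/(bK³))`;
so the summands differ by at most `3/(bK²)`, and `∑ 1/K² = π²/6` gives `|r b - C₀| ≤ π²/(2b)`. -/

noncomputable def r (b : ℕ) : ℝ :=
  ∑' k : ℕ, ((k : ℝ) + 1) *
    (Real.log ((((k : ℝ) + 2) * b - 1) / (((k : ℝ) + 1) * b - 1)) -
      1 / ((k : ℝ) + 1) + 1 / (2 * ((k : ℝ) + 1) ^ 2) -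
      1 / (b * ((k : ℝ) + 1) ^ 2))

open Real

theorem nonneg_of_hasDerivAt_nonneg {f f' : ℝ → ℝ} (h₀ : f 0 = 0)
    (hf : ∀ y, 0 ≤ y → HasDerivAt f (f' y) y) (hf' : ∀ y, 0 ≤ y → 0 ≤ f' y)
    {x : ℝ} (hx : 0 ≤ x) : 0 ≤ f x := by
  have hmono : MonotoneOn f (Set.Ici 0) :=
    monotoneOn_of_hasDerivWithinAt_nonneg (convex_Ici 0)
      (fun y hy ↦ (hf y hy).continuousAt.continuousWithinAt)
      (fun y hy ↦ (hf y (interior_subset hy)).hasDerivWithinAt)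
      (fun y hy ↦ hf' y (interior_subset hy))
  simpa [h₀] using hmono Set.self_mem_Ici hx hx

theorem hasDerivAt_log_one_add_sub_taylor {x : ℝ} (hx : 0 ≤ x) :
    HasDerivAt (fun y ↦ log (1 + y) - y + y ^ 2 / 2) (x ^ 2 / (1 + x)) x := by
  have : 1 + x ≠ 0 := by positivity
  refine (((((hasDerivAt_id' x).const_add 1).log this).sub (hasDerivAt_id' x)).add
    ((hasDerivAt_pow 2 x).div_const 2)).congr_deriv ?_
  field_simp
  ring

theorem log_one_add_lower {x : ℝ} (hx : 0 ≤ x) : x - x ^ 2 / 2 ≤ log (1 + x) := by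
  have := nonneg_of_hasDerivAt_nonneg (by simp) (fun y hy ↦ hasDerivAt_log_one_add_sub_taylor hy)
    (fun y hy ↦ by positivity) hx
  linarith

theorem log_one_add_upper {x : ℝ} (hx : 0 ≤ x) :
    log (1 + x) ≤ x - x ^ 2 / 2 + x ^ 3 / 3 := by
  have := nonneg_of_hasDerivAt_nonneg (f := fun y ↦ y ^ 3 / 3 - (log (1 + y) - y + y ^ 2 / 2))
    (by simp) (fun y hy ↦ ((hasDerivAt_pow 3 y).div_const 3).sub
      (hasDerivAt_log_one_add_sub_taylor hy))
    (fun y hy ↦ by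
      have : 1 + y ≠ 0 := by positivity
      rw [show (3 : ℕ) * y ^ (3 - 1) / 3 - y ^ 2 / (1 + y) = y ^ 3 / (1 + y) by
        field_simp; ring]
      positivity) hx
  linarith

theorem abs_log_one_add_sub_le {u v : ℝ} (hu : 0 ≤ u) (huv : u ≤ v) :
    |log (1 + u) - v| ≤ v - u + u ^ 2 / 2 := by
  have hupper : log (1 + u) ≤ u := by
    linarith [log_le_sub_one_of_pos (show 0 < 1 + u by positivity)]
  have hlower := log_one_add_lower hu
  rw [abs_le]
  constructor <;> linarith

theorem abs_tsum_sub_tsum_le {ι : Type*} {f g h : ι → ℝ} {a : ℝ} (hg : Summable g)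
    (hh : HasSum h a) (hfg : ∀ i, |f i - g i| ≤ h i) : |∑' i, f i - ∑' i, g i| ≤ a := by
  have hf : Summable f := by
    simpa using (Summable.of_norm_bounded hh.summable hfg).add hg
  rw [← hf.tsum_sub hg]
  exact tsum_of_norm_bounded (f := fun i ↦ f i - g i) hh hfg

theorem hasSum_one_div_nat_add_one_sq :
    HasSum (fun k : ℕ ↦ 1 / ((k : ℝ) + 1) ^ 2) (π ^ 2 / 6) := by
  simpa using (hasSum_nat_add_iff' 1).mpr hasSum_zeta_two

noncomputable def limitTerm (K : ℝ) : ℝ :=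
  K * (log ((K + 1) / K) - 1 / K + 1 / (2 * K ^ 2))

noncomputable def rSummand (B K : ℝ) : ℝ :=
  K * (log (((K + 1) * B - 1) / (K * B - 1)) - 1 / K + 1 / (2 * K ^ 2) - 1 / (B * K ^ 2))

theorem r_eq_tsum_rSummand (b : ℕ) : r b = ∑' k : ℕ, rSummand b ((k : ℝ) + 1) := by
  unfold r rSummand
  congr! 4
  rw [add_assoc, one_add_one_eq_two]

theorem limitTerm_mem_Icc {K : ℝ} (hK : 0 < K) :
    limitTerm K ∈ Set.Icc 0 (1 / 3 * (1 / K ^ 2)) := by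
  have hsplit : limitTerm K = K * (log (1 + 1 / K) - 1 / K + (1 / K) ^ 2 / 2) := by
    rw [limitTerm, add_div, div_self hK.ne', add_comm]
    ring
  have hlower := log_one_add_lower (x := 1 / K) (by positivity)
  have hupper := log_one_add_upper (x := 1 / K) (by positivity)
  rw [hsplit]
  constructor
  · exact mul_nonneg hK.le (by linarith)
  · calc K * (log (1 + 1 / K) - 1 / K + (1 / K) ^ 2 / 2) ≤ K * ((1 / K) ^ 3 / 3) := by
          gcongr
          linarith
      _ = 1 / 3 * (1 / K ^ 2) := by
          field_simp

theorem summable_limitTerm : Summable fun k : ℕ ↦ limitTerm ((k : ℝ) + 1) :=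
  Summable.of_nonneg_of_le (fun k ↦ (limitTerm_mem_Icc (by positivity)).1)
    (fun k ↦ (limitTerm_mem_Icc (by positivity)).2)
    (hasSum_one_div_nat_add_one_sq.summable.mul_left _)

theorem abs_rSummand_sub_limitTerm_le {B K : ℝ} (hB : 2 ≤ B) (hK : 1 ≤ K) :
    |rSummand B K - limitTerm K| ≤ 3 / B * (1 / K ^ 2) := by
  have hKB : 1 ≤ K * B - 1 := by nlinarith
  set u := 1 / ((K * B - 1) * (K + 1)) with hu_def
  set v := 1 / (B * K ^ 2)
  have hu : 0 ≤ u := by positivity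
  have huv : u ≤ v := by
    rw [div_le_div_iff₀ (by positivity) (by positivity)]
    nlinarith
  have hsplit : rSummand B K - limitTerm K = K * (log (1 + u) - v) := by
    have hratio : ((K + 1) * B - 1) / (K * B - 1) = (K + 1) / K * (1 + u) := by
      rw [hu_def]
      field_simp
      ring
    rw [rSummand, limitTerm, hratio, log_mul (by positivity) (by positivity)]
    ring
  have hgap : v - u ≤ 2 / (B * K ^ 3) := by
    have hpoly : 0 ≤ K ^ 2 * B + 2 * K * B + K ^ 2 - K - 2 := by nlinarith
    rw [div_sub_div _ _ (by positivity) (by positivity),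
      div_le_div_iff₀ (by positivity) (by positivity)]
    nlinarith [mul_nonneg (by positivity : (0 : ℝ) ≤ B * K ^ 2) hpoly]
  have hsq : u ^ 2 / 2 ≤ 1 / (B * K ^ 3) := by
    calc u ^ 2 / 2 ≤ v ^ 2 / 2 := by gcongr
      _ ≤ 1 / (B * K ^ 3) := by
        rw [div_pow, div_div, div_le_div_iff₀ (by positivity) (by positivity)]
        nlinarith
  calc |rSummand B K - limitTerm K| = K * |log (1 + u) - v| := by
        rw [hsplit, abs_mul, abs_of_pos (by positivity)]
    _ ≤ K * (v - u + u ^ 2 / 2) := by gcongr; exact abs_log_one_add_sub_le hu huv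
    _ ≤ K * (2 / (B * K ^ 3) + 1 / (B * K ^ 3)) := by gcongr 1; linarith
    _ = 3 / B * (1 / K ^ 2) := by field_simp; norm_num

theorem stmt_15 :
    ∃ (C₀ A : ℝ), 0 < A ∧ ∀ b : ℕ, 2 ≤ b → |r b - C₀| ≤ A / b := by
  refine ⟨∑' k : ℕ, limitTerm ((k : ℝ) + 1), π ^ 2 / 2, by positivity, fun b hb ↦ ?_⟩
  have hB : (2 : ℝ) ≤ b := by exact_mod_cast hb
  rw [r_eq_tsum_rSummand]
  refine (abs_tsum_sub_tsum_le summable_limitTerm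
    (hasSum_one_div_nat_add_one_sq.mul_left (3 / (b : ℝ)))
    fun k ↦ abs_rSummand_sub_limitTerm_le hB (by simp)).trans_eq (by ring)
end
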